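/- The Cantor function c : [0,1] → [0,1] satisfies |c(x) − c(y)| ≤ |x−y|^α for all x, y ∈ [0,1], where α = log 2 / log 3; i.e., c is α-Hölder continuous with constant 1. -/
import Mathlib


noncomputable def modCont (f : ℝ → ℝ) (a b : ℝ) (δ : ℝ) : ℝ :=
  sSup {d : ℝ | ∃ x ∈ Set.Icc a b, ∃ y ∈ Set.Icc a b, |x - y| ≤ δ ∧ d = |f x - f y|}

def AbsolutelyContinuousOn (g : ℝ → ℝ) (a b : ℝ) : Prop :=
  ∀ ε > (0:ℝ), ∃ δ > (0:ℝ), ∀ n : ℕ, ∀ x y : ℕ → ℝ,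
    (∀ i < n, a ≤ x i ∧ x i ≤ y i ∧ y i ≤ b) →
    (∀ i < n, ∀ j < n, i ≠ j → Disjoint (Set.Ioo (x i) (y i)) (Set.Ioo (x j) (y j))) →
    (∑ i ∈ Finset.range n, (y i - x i)) < δ →
    (∑ i ∈ Finset.range n, |g (y i) - g (x i)|) < ε

/-- The standard Cantor function is the unique monotone function on `[0,1]` with
`c 0 = 0`, `c 1 = 1`, satisfying the self-similarity relations
`c (x/3) = c x / 2` and `c ((x+2)/3) = (1 + c x)/2`. -/
def IsCantorFunction (c : ℝ → ℝ) : Prop :=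
  MonotoneOn c (Set.Icc 0 1) ∧ c 0 = 0 ∧ c 1 = 1 ∧
  (∀ x ∈ Set.Icc (0:ℝ) 1, c (x / 3) = c x / 2) ∧
  (∀ x ∈ Set.Icc (0:ℝ) 1, c ((x + 2) / 3) = (1 + c x) / 2)

noncomputable def cantorAlpha : ℝ := Real.log 2 / Real.log 3

section CantorAux

open Set

private noncomputable def cα : ℝ := Real.log 2 / Real.log 3

private lemma hα0 : 0 < cα := div_pos (Real.log_pos (by norm_num)) (Real.log_pos (by norm_num))

private lemma hα1 : cα ≤ 1 := by
  rw [cα, div_le_one (Real.log_pos (by norm_num))]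
  exact Real.log_le_log (by norm_num) (by norm_num)

private lemma h3α : (3:ℝ) ^ cα = 2 := by
  rw [cα, Real.rpow_def_of_pos (by norm_num : (0:ℝ) < 3)]
  have h : Real.log 3 * (Real.log 2 / Real.log 3) = Real.log 2 := by
    field_simp
  rw [h, Real.exp_log (by norm_num)]

private lemma hconc (a b : ℝ) (ha : 0 ≤ a) (hb : 0 ≤ b) :
    a ^ cα + b ^ cα ≤ 2 * ((a + b) / 2) ^ cα := by
  have := (Real.concaveOn_rpow hα0.le hα1).2 (mem_Ici.2 ha) (mem_Ici.2 hb)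
    (by norm_num : (0:ℝ) ≤ 1/2) (by norm_num : (0:ℝ) ≤ 1/2) (by norm_num)
  simp only [smul_eq_mul] at this
  have h2 : (1:ℝ)/2 * a + 1/2 * b = (a+b)/2 := by ring
  rw [h2] at this
  linarith

private lemma hscale (s : ℝ) (hs : 0 ≤ s) : (3*s) ^ cα = 2 * s ^ cα := by
  rw [Real.mul_rpow (by norm_num) hs, h3α]

private lemma hK1 (t : ℝ) (ht : t ∈ Icc (0:ℝ) 1) : (1 + t ^ cα) / 2 ≤ ((t + 2)/3) ^ cα := by
  have h1 := hconc 1 t (by norm_num) ht.1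
  rw [Real.one_rpow] at h1
  have h2 : ((1+t)/2 : ℝ) ^ cα ≤ ((t+2)/3) ^ cα :=
    Real.rpow_le_rpow (by linarith [ht.1]) (by linarith [ht.2]) hα0.le
  linarith

private lemma hK2 (a b : ℝ) (ha : a ∈ Icc (0:ℝ) 1) (hb : b ∈ Icc (0:ℝ) 1) :
    (a ^ cα + b ^ cα) / 2 ≤ ((a + b + 1)/3) ^ cα := by
  have h1 := hconc a b ha.1 hb.1
  have h2 : ((a+b)/2 : ℝ) ^ cα ≤ ((a+b+1)/3) ^ cα :=
    Real.rpow_le_rpow (by linarith [ha.1, hb.1]) (by linarith [ha.2, hb.2]) hα0.le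
  linarith

private lemma cantor_main (c : ℝ → ℝ) (hc : IsCantorFunction c) :
    ∀ x ∈ Icc (0:ℝ) 1, ∀ y ∈ Icc (0:ℝ) 1, x ≤ y → c y - c x ≤ (y - x) ^ cα := by
  obtain ⟨hm, h0, h1, hA, hB⟩ := hc
  have m0 : (0:ℝ) ∈ Icc (0:ℝ) 1 := by norm_num
  have m1 : (1:ℝ) ∈ Icc (0:ℝ) 1 := by norm_num
  have hbd : ∀ z ∈ Icc (0:ℝ) 1, 0 ≤ c z ∧ c z ≤ 1 := by
    intro z hz
    constructor
    · have := hm m0 hz hz.1; linarith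
    · have := hm hz m1 hz.2; linarith
  have h13 : c (1/3) = 1/2 := by
    have := hA 1 m1
    rw [h1] at this
    simpa using this
  have h23 : c (2/3) = 1/2 := by
    have := hB 0 m0
    rw [h0] at this
    norm_num at this
    exact this
  have hmid : ∀ z : ℝ, 1/3 ≤ z → z ≤ 2/3 → c z = 1/2 := by
    intro z hz1 hz2
    have hzm : z ∈ Icc (0:ℝ) 1 := ⟨by linarith, by linarith⟩
    have l := hm (⟨by norm_num, by norm_num⟩ : (1/3:ℝ) ∈ Icc (0:ℝ) 1) hzm hz1
    have u := hm hzm (⟨by norm_num, by norm_num⟩ : (2/3:ℝ) ∈ Icc (0:ℝ) 1) hz2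
    rw [h13] at l
    rw [h23] at u
    linarith
  -- L1 with error term
  have L1 : ∀ n : ℕ, ∀ y ∈ Icc (0:ℝ) 1, c y ≤ y ^ cα + (1/2:ℝ)^n := by
    intro n
    induction n with
    | zero =>
      intro y hy
      have hb := (hbd y hy).2
      have hr := Real.rpow_nonneg hy.1 cα
      simp only [pow_zero]
      linarith
    | succ n ih =>
      intro y hy
      obtain ⟨hy0, hy1⟩ := hy
      rcases le_or_gt y (1/3) with hy3 | hy3
      · have hmem : (3*y) ∈ Icc (0:ℝ) 1 := ⟨by linarith, by linarith⟩
        have heq : c y = c (3*y) / 2 := by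
          have := hA (3*y) hmem
          rw [show (3*y)/3 = y by ring] at this
          exact this
        have hih := ih (3*y) hmem
        rw [hscale y hy0] at hih
        rw [heq, pow_succ]
        linarith
      · rcases le_or_gt y (2/3) with hy6 | hy6
        · have hcy : c y = 1/2 := hmid y hy3.le hy6
          have hle : ((1:ℝ)/3) ^ cα ≤ y ^ cα :=
            Real.rpow_le_rpow (by norm_num) hy3.le hα0.le
          have h13' : ((1:ℝ)/3) ^ cα = 1/2 := by
            rw [show ((1:ℝ)/3) = 3⁻¹ by norm_num, Real.inv_rpow (by norm_num), h3α]
            norm_num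
          have hp : (0:ℝ) ≤ (1/2:ℝ)^(n+1) := by positivity
          rw [hcy]
          linarith
        · have hmem : (3*y - 2) ∈ Icc (0:ℝ) 1 := ⟨by linarith, by linarith⟩
          have heq : c y = (1 + c (3*y-2)) / 2 := by
            have := hB (3*y-2) hmem
            rw [show (3*y-2+2)/3 = y by ring] at this
            exact this
          have hih := ih (3*y-2) hmem
          have hk := hK1 (3*y-2) hmem
          rw [show (3*y-2+2)/3 = y by ring] at hk
          rw [heq, pow_succ]
          linarith
  -- L2 with error term
  have L2 : ∀ n : ℕ, ∀ x ∈ Icc (0:ℝ) 1, 1 - c x ≤ (1 - x) ^ cα + (1/2:ℝ)^n := by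
    intro n
    induction n with
    | zero =>
      intro x hx
      have hb := (hbd x hx).1
      have hr := Real.rpow_nonneg (by linarith [hx.2] : (0:ℝ) ≤ 1 - x) cα
      simp only [pow_zero]
      linarith
    | succ n ih =>
      intro x hx
      obtain ⟨hx0, hx1⟩ := hx
      rcases le_or_gt x (1/3) with hx3 | hx3
      · have hmem : (3*x) ∈ Icc (0:ℝ) 1 := ⟨by linarith, by linarith⟩
        have heq : c x = c (3*x) / 2 := by
          have := hA (3*x) hmem
          rw [show (3*x)/3 = x by ring] at this
          exact this
        have hih := ih (3*x) hmem
        have hk := hK1 (1 - 3*x) ⟨by linarith, by linarith⟩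
        rw [show (1 - 3*x + 2)/3 = 1 - x by ring] at hk
        rw [heq, pow_succ]
        linarith
      · rcases le_or_gt x (2/3) with hx6 | hx6
        · have hcx : c x = 1/2 := hmid x hx3.le hx6
          have hle : ((1:ℝ)/3) ^ cα ≤ (1-x) ^ cα :=
            Real.rpow_le_rpow (by norm_num) (by linarith) hα0.le
          have h13' : ((1:ℝ)/3) ^ cα = 1/2 := by
            rw [show ((1:ℝ)/3) = 3⁻¹ by norm_num, Real.inv_rpow (by norm_num), h3α]
            norm_num
          have hp : (0:ℝ) ≤ (1/2:ℝ)^(n+1) := by positivity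
          rw [hcx]
          linarith
        · have hmem : (3*x - 2) ∈ Icc (0:ℝ) 1 := ⟨by linarith, by linarith⟩
          have heq : c x = (1 + c (3*x-2)) / 2 := by
            have := hB (3*x-2) hmem
            rw [show (3*x-2+2)/3 = x by ring] at this
            exact this
          have hih := ih (3*x-2) hmem
          have hsc : (1 - (3*x-2)) ^ cα = 2 * (1-x) ^ cα := by
            rw [show (1 - (3*x-2)) = 3*(1-x) by ring]
            exact hscale (1-x) (by linarith)
          rw [hsc] at hih
          rw [heq, pow_succ]
          linarith
  -- exact versions
  have half_lim : ∀ a b : ℝ, (∀ n : ℕ, a ≤ b + (1/2:ℝ)^n) → a ≤ b := by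
    intro a b h
    refine le_of_forall_pos_le_add ?_
    intro ε hε
    obtain ⟨n, hn⟩ := exists_pow_lt_of_lt_one hε (by norm_num : (1/2:ℝ) < 1)
    exact (h n).trans (by linarith)
  have L1' : ∀ y ∈ Icc (0:ℝ) 1, c y ≤ y ^ cα := fun y hy =>
    half_lim _ _ (fun n => L1 n y hy)
  have L2' : ∀ x ∈ Icc (0:ℝ) 1, 1 - c x ≤ (1 - x) ^ cα := fun x hx =>
    half_lim _ _ (fun n => L2 n x hx)
  -- main estimate with error term
  have P : ∀ n : ℕ, ∀ x ∈ Icc (0:ℝ) 1, ∀ y ∈ Icc (0:ℝ) 1, x ≤ y →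
      c y - c x ≤ (y - x) ^ cα + (1/2:ℝ)^n := by
    intro n
    induction n with
    | zero =>
      intro x hx y hy _
      have h1 := (hbd x hx).1
      have h2 := (hbd y hy).2
      have hr := Real.rpow_nonneg (by linarith : (0:ℝ) ≤ y - x) cα
      simp only [pow_zero]
      linarith
    | succ n ih =>
      intro x hx y hy hxy
      obtain ⟨hx0, hx1⟩ := hx
      obtain ⟨hy0, hy1⟩ := hy
      rcases le_or_gt y (1/3) with hy3 | hy3
      · -- both in [0,1/3]
        have hmx : (3*x) ∈ Icc (0:ℝ) 1 := ⟨by linarith, by linarith⟩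
        have hmy : (3*y) ∈ Icc (0:ℝ) 1 := ⟨by linarith, by linarith⟩
        have heqx : c x = c (3*x) / 2 := by
          have := hA (3*x) hmx; rw [show (3*x)/3 = x by ring] at this; exact this
        have heqy : c y = c (3*y) / 2 := by
          have := hA (3*y) hmy; rw [show (3*y)/3 = y by ring] at this; exact this
        have hih := ih (3*x) hmx (3*y) hmy (by linarith)
        have hsc : (3*y - 3*x) ^ cα = 2 * (y-x) ^ cα := by
          rw [show (3*y - 3*x) = 3*(y-x) by ring]
          exact hscale (y-x) (by linarith)
        rw [hsc] at hih
        rw [heqx, heqy, pow_succ]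
        linarith
      · rcases le_or_gt (2/3) x with hx6 | hx6
        · -- both in [2/3,1]
          have hmx : (3*x - 2) ∈ Icc (0:ℝ) 1 := ⟨by linarith, by linarith⟩
          have hmy : (3*y - 2) ∈ Icc (0:ℝ) 1 := ⟨by linarith, by linarith⟩
          have heqx : c x = (1 + c (3*x-2)) / 2 := by
            have := hB (3*x-2) hmx; rw [show (3*x-2+2)/3 = x by ring] at this; exact this
          have heqy : c y = (1 + c (3*y-2)) / 2 := by
            have := hB (3*y-2) hmy; rw [show (3*y-2+2)/3 = y by ring] at this; exact this
          have hih := ih (3*x-2) hmx (3*y-2) hmy (by linarith)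
          have hsc : ((3*y-2) - (3*x-2)) ^ cα = 2 * (y-x) ^ cα := by
            rw [show ((3*y-2) - (3*x-2)) = 3*(y-x) by ring]
            exact hscale (y-x) (by linarith)
          rw [hsc] at hih
          rw [heqx, heqy, pow_succ]
          linarith
        · have hp : (0:ℝ) ≤ (1/2:ℝ)^(n+1) := by positivity
          rcases le_or_gt x (1/3) with hx3 | hx3
          · rcases le_or_gt y (2/3) with hy6 | hy6
            · -- x ≤ 1/3 < y ≤ 2/3
              have hcy : c y = 1/2 := hmid y hy3.le hy6
              have hmx : (3*x) ∈ Icc (0:ℝ) 1 := ⟨by linarith, by linarith⟩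
              have heqx : c x = c (3*x) / 2 := by
                have := hA (3*x) hmx; rw [show (3*x)/3 = x by ring] at this; exact this
              have hl2 := L2' (3*x) hmx
              have hsc : (1 - 3*x) ^ cα = 2 * (1/3 - x) ^ cα := by
                rw [show (1 - 3*x) = 3*(1/3 - x) by ring]
                exact hscale (1/3 - x) (by linarith)
              rw [hsc] at hl2
              have hle : ((1:ℝ)/3 - x) ^ cα ≤ (y - x) ^ cα :=
                Real.rpow_le_rpow (by linarith) (by linarith) hα0.le
              rw [hcy, heqx]
              linarith
            · -- x ≤ 1/3, y > 2/3
              have hmx : (3*x) ∈ Icc (0:ℝ) 1 := ⟨by linarith, by linarith⟩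
              have hmy : (3*y - 2) ∈ Icc (0:ℝ) 1 := ⟨by linarith, by linarith⟩
              have heqx : c x = c (3*x) / 2 := by
                have := hA (3*x) hmx; rw [show (3*x)/3 = x by ring] at this; exact this
              have heqy : c y = (1 + c (3*y-2)) / 2 := by
                have := hB (3*y-2) hmy; rw [show (3*y-2+2)/3 = y by ring] at this; exact this
              have hl1 := L1' (3*y-2) hmy
              have hl2 := L2' (3*x) hmx
              have hk := hK2 (3*y-2) (1 - 3*x) hmy ⟨by linarith, by linarith⟩
              rw [show ((3*y-2) + (1 - 3*x) + 1)/3 = y - x by ring] at hk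
              rw [heqx, heqy]
              linarith
          · rcases le_or_gt y (2/3) with hy6 | hy6
            · -- both in middle
              have hcx : c x = 1/2 := hmid x hx3.le hx6.le
              have hcy : c y = 1/2 := hmid y hy3.le hy6
              have hr := Real.rpow_nonneg (by linarith : (0:ℝ) ≤ y - x) cα
              rw [hcx, hcy]
              linarith
            · -- 1/3 < x < 2/3 < y
              have hcx : c x = 1/2 := hmid x hx3.le hx6.le
              have hmy : (3*y - 2) ∈ Icc (0:ℝ) 1 := ⟨by linarith, by linarith⟩
              have heqy : c y = (1 + c (3*y-2)) / 2 := by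
                have := hB (3*y-2) hmy; rw [show (3*y-2+2)/3 = y by ring] at this; exact this
              have hl1 := L1' (3*y-2) hmy
              have hsc : (3*y - 2) ^ cα = 2 * (y - 2/3) ^ cα := by
                rw [show (3*y - 2) = 3*(y - 2/3) by ring]
                exact hscale (y - 2/3) (by linarith)
              rw [hsc] at hl1
              have hle : (y - (2:ℝ)/3) ^ cα ≤ (y - x) ^ cα :=
                Real.rpow_le_rpow (by linarith) (by linarith) hα0.le
              rw [hcx, heqy]
              linarith
  intro x hx y hy hxy
  exact half_lim _ _ (fun n => P n x hx y hy hxy)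

end CantorAux

theorem stmt3 (c : ℝ → ℝ) (hc : IsCantorFunction c) :
    ∀ x ∈ Set.Icc (0:ℝ) 1, ∀ y ∈ Set.Icc (0:ℝ) 1,
      |c x - c y| ≤ |x - y| ^ (Real.log 2 / Real.log 3) := by
  intro x hx y hy
  have hm := hc.1
  have key := cantor_main c hc
  rcases le_total x y with h | h
  · have hcm : c x ≤ c y := hm hx hy h
    rw [abs_sub_comm (c x) (c y), abs_of_nonneg (by linarith : (0:ℝ) ≤ c y - c x),
      abs_sub_comm x y, abs_of_nonneg (by linarith : (0:ℝ) ≤ y - x)]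
    exact key x hx y hy h
  · have hcm : c y ≤ c x := hm hy hx h
    rw [abs_of_nonneg (by linarith : (0:ℝ) ≤ c x - c y),
      abs_of_nonneg (by linarith : (0:ℝ) ≤ x - y)]
    exact key y hy x hx h
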